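/- Under the ADMM iteration for the problem min δᵀUδ + I_Ω̂(ω) s.t. Γδ = c + ω, if ρ > 2√2·φ where φ is the largest eigenvalue of U, then the augmented Lagrangian values L_ρ(δ^k, ω^k, λ^k) form a monotonically non-increasing sequence; specifically L_ρ(δ^{k+1}, ω^{k+1}, λ^{k+1}) ≤ L_ρ(δ^k, ω^k, λ^k) − (ρ/2 − 4φ²/ρ)‖δ^{k+1} − δ^k‖². -/
import Mathlib


open Matrix

theorem stmt13 {d : ℕ} (ρ φ : ℝ) (hφ : 0 ≤ φ) (hρ0 : 0 < ρ)
    (hρ : 2 * Real.sqrt 2 * φ < ρ)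
    (L : (Fin d → ℝ) → (Fin (d + 1) → ℝ) → (Fin (d + 1) → ℝ) → ℝ)
    (δ : ℕ → Fin d → ℝ) (ω lam : ℕ → Fin (d + 1) → ℝ)
    (hω : ∀ k, L (δ k) (ω (k + 1)) (lam k) ≤ L (δ k) (ω k) (lam k))
    (hδ : ∀ k, L (δ (k + 1)) (ω (k + 1)) (lam k) ≤
      L (δ k) (ω (k + 1)) (lam k) -
        ρ / 2 * ((δ (k + 1) - δ k) ⬝ᵥ (δ (k + 1) - δ k)))
    (hlam : ∀ k, L (δ (k + 1)) (ω (k + 1)) (lam (k + 1)) -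
      L (δ (k + 1)) (ω (k + 1)) (lam k) =
        1 / ρ * ((lam (k + 1) - lam k) ⬝ᵥ (lam (k + 1) - lam k)))
    (hbound : ∀ k, (lam (k + 1) - lam k) ⬝ᵥ (lam (k + 1) - lam k) ≤
      4 * φ ^ 2 * ((δ (k + 1) - δ k) ⬝ᵥ (δ (k + 1) - δ k))) :
    (∀ k, L (δ (k + 1)) (ω (k + 1)) (lam (k + 1)) ≤
      L (δ k) (ω k) (lam k) -
        (ρ / 2 - 4 * φ ^ 2 / ρ) * ((δ (k + 1) - δ k) ⬝ᵥ (δ (k + 1) - δ k))) ∧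
    (∀ k, L (δ (k + 1)) (ω (k + 1)) (lam (k + 1)) ≤ L (δ k) (ω k) (lam k)) := by
  have key : ∀ k, L (δ (k + 1)) (ω (k + 1)) (lam (k + 1)) ≤
      L (δ k) (ω k) (lam k) -
        (ρ / 2 - 4 * φ ^ 2 / ρ) * ((δ (k + 1) - δ k) ⬝ᵥ (δ (k + 1) - δ k)) := by
    intro k
    have h1 := hω k
    have h2 := hδ k
    have h3 := hlam k
    have h4 := hbound k
    have h5 : 1 / ρ * ((lam (k + 1) - lam k) ⬝ᵥ (lam (k + 1) - lam k)) ≤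
        4 * φ ^ 2 / ρ * ((δ (k + 1) - δ k) ⬝ᵥ (δ (k + 1) - δ k)) := by
      rw [div_mul_eq_mul_div, div_mul_eq_mul_div, one_mul]
      gcongr
    nlinarith
  refine ⟨key, fun k => ?_⟩
  have h := key k
  have hsq : 0 ≤ (δ (k + 1) - δ k) ⬝ᵥ (δ (k + 1) - δ k) := by
    exact Finset.sum_nonneg fun i _ => mul_self_nonneg _
  have hc : 0 ≤ ρ / 2 - 4 * φ ^ 2 / ρ := by
    have h2 : Real.sqrt 2 ^ 2 = 2 := Real.sq_sqrt (by norm_num)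
    have : 8 * φ ^ 2 ≤ ρ ^ 2 := by nlinarith [Real.sqrt_nonneg 2, mul_nonneg (mul_nonneg (by norm_num : (0:ℝ) ≤ 2) (Real.sqrt_nonneg 2)) hφ]
    rw [sub_nonneg, div_le_div_iff₀ hρ0 (by norm_num)]
    nlinarith
  nlinarith [mul_nonneg hc hsq]
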